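/- Let A ∈ ℝ^{m×n}, B ∈ ℝ^{m×l}, and λ, τ, σ > 0. If λτ‖AᵀA‖ + λσ‖BᵀB‖ < 1 (where ‖·‖ is the spectral norm), then the block matrix P with blocks P₁₁ = (1/τ)I_n − λAᵀA, P₁₂ = −λAᵀB, P₂₁ = −λBᵀA, P₂₂ = (1/σ)I_l − λBᵀB is positive definite. -/

import Mathlib

/-!
Write `v = (x, y)` and let `‖·‖` be the Euclidean norm. The quadratic form of `P` is
`vᵀ P v = ‖x‖²/τ + ‖y‖²/σ - λ ‖A x + B y‖²`. By the triangle inequality and the weighted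
Cauchy–Schwarz inequality `(a s + b t)² ≤ (τ a² + σ b²) (s²/τ + t²/σ)`,
`λ ‖A x + B y‖² ≤ λ (‖A‖ ‖x‖ + ‖B‖ ‖y‖)² ≤ (λ τ ‖A‖² + λ σ ‖B‖²) (‖x‖²/τ + ‖y‖²/σ)`,
and the first factor is `< 1` because `‖AᵀA‖ = ‖A‖²` and `‖BᵀB‖ = ‖B‖²`.
-/

open Matrix
open scoped Matrix.Norms.L2Operator

lemma sq_add_le_mul_add_div_add_div {τ σ : ℝ} (hτ : 0 < τ) (hσ : 0 < σ) (a b s t : ℝ) :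
    (a * s + b * t) ^ 2 ≤ (τ * a ^ 2 + σ * b ^ 2) * (s ^ 2 / τ + t ^ 2 / σ) := by
  rw [div_add_div _ _ hτ.ne' hσ.ne', mul_div_assoc', le_div_iff₀ (by positivity)]
  nlinarith [sq_nonneg (τ * a * t - σ * b * s)]

namespace Matrix

variable {ι m n l : Type*} [Fintype ι] [Fintype m] [Fintype n] [Fintype l]

lemma dotProduct_self_eq_norm_toLp_sq (v : ι → ℝ) : v ⬝ᵥ v = ‖WithLp.toLp 2 v‖ ^ 2 := by
  rw [← real_inner_self_eq_norm_sq, EuclideanSpace.inner_toLp_toLp, star_trivial]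

lemma l2_opNorm_transpose_mul_self [DecidableEq n] (A : Matrix m n ℝ) :
    ‖Aᵀ * A‖ = ‖A‖ ^ 2 := by
  rw [← conjTranspose_eq_transpose_of_trivial, l2_opNorm_conjTranspose_mul_self, sq]

lemma norm_toLp_mulVec_le [DecidableEq n] (A : Matrix m n ℝ) (x : n → ℝ) :
    ‖WithLp.toLp 2 (A *ᵥ x)‖ ≤ ‖A‖ * ‖WithLp.toLp 2 x‖ :=
  A.l2_opNorm_mulVec (WithLp.toLp 2 x)

lemma norm_toLp_mulVec_add_mulVec_sq_le [DecidableEq n] [DecidableEq l]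
    (A : Matrix m n ℝ) (B : Matrix m l ℝ) (x : n → ℝ) (y : l → ℝ)
    {τ σ : ℝ} (hτ : 0 < τ) (hσ : 0 < σ) :
    ‖WithLp.toLp 2 (A *ᵥ x + B *ᵥ y)‖ ^ 2 ≤
      (τ * ‖A‖ ^ 2 + σ * ‖B‖ ^ 2) *
        (‖WithLp.toLp 2 x‖ ^ 2 / τ + ‖WithLp.toLp 2 y‖ ^ 2 / σ) :=
  calc ‖WithLp.toLp 2 (A *ᵥ x + B *ᵥ y)‖ ^ 2
      ≤ (‖A‖ * ‖WithLp.toLp 2 x‖ + ‖B‖ * ‖WithLp.toLp 2 y‖) ^ 2 := by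
        gcongr
        rw [WithLp.toLp_add]
        exact (norm_add_le _ _).trans
          (add_le_add (norm_toLp_mulVec_le A x) (norm_toLp_mulVec_le B y))
    _ ≤ _ := sq_add_le_mul_add_div_add_div hτ hσ _ _ _ _

lemma sumElim_dotProduct_fromBlocks_mulVec_sumElim [DecidableEq n] [DecidableEq l]
    (A : Matrix m n ℝ) (B : Matrix m l ℝ)
    (a b c : ℝ) (x : n → ℝ) (y : l → ℝ) :
    Sum.elim x y ⬝ᵥ (fromBlocks (a • 1 - c • (Aᵀ * A)) (-(c • (Aᵀ * B)))
        (-(c • (Bᵀ * A))) (b • 1 - c • (Bᵀ * B)) *ᵥ Sum.elim x y) =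
      a * ‖WithLp.toLp 2 x‖ ^ 2 + b * ‖WithLp.toLp 2 y‖ ^ 2
        - c * ‖WithLp.toLp 2 (A *ᵥ x + B *ᵥ y)‖ ^ 2 := by
  simp only [← dotProduct_self_eq_norm_toLp_sq, fromBlocks_mulVec, sumElim_dotProduct_sumElim,
    sub_mulVec, neg_mulVec, smul_mulVec, one_mulVec, ← mulVec_mulVec, dotProduct_add,
    add_dotProduct, dotProduct_sub, dotProduct_neg, dotProduct_smul, smul_eq_mul,
    Sum.elim_comp_inl, Sum.elim_comp_inr, dotProduct_transpose_mulVec]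
  rw [dotProduct_comm (B *ᵥ y) (A *ᵥ x)]
  ring

end Matrix

/-- if `λτ‖AᵀA‖ + λσ‖BᵀB‖ < 1` then the block matrix
`[(1/τ)I − λAᵀA, −λAᵀB; −λBᵀA, (1/σ)I − λBᵀB]` is positive definite. -/
theorem block_P_posDef (m n l : ℕ) (A : Matrix (Fin m) (Fin n) ℝ) (B : Matrix (Fin m) (Fin l) ℝ)
    (lam tau sigma : ℝ) (hlam : 0 < lam) (htau : 0 < tau) (hsigma : 0 < sigma)
    (hcond : lam * tau * ‖Aᵀ * A‖ + lam * sigma * ‖Bᵀ * B‖ < 1) :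
    (Matrix.fromBlocks
      ((1 / tau) • (1 : Matrix (Fin n) (Fin n) ℝ) - lam • (Aᵀ * A))
      (-(lam • (Aᵀ * B)))
      (-(lam • (Bᵀ * A)))
      ((1 / sigma) • (1 : Matrix (Fin l) (Fin l) ℝ) - lam • (Bᵀ * B))).PosDef := by
  rw [posDef_iff_dotProduct_mulVec]
  refine ⟨?_, fun v hv => ?_⟩
  · simp only [IsHermitian, conjTranspose_eq_transpose_of_trivial, fromBlocks_transpose,
      transpose_sub, transpose_smul, transpose_one, transpose_mul, transpose_transpose,
      transpose_neg]
  obtain ⟨x, y, rfl⟩ : ∃ x y, v = Sum.elim x y := ⟨_, _, (Sum.elim_comp_inl_inr v).symm⟩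
  set Q := ‖WithLp.toLp 2 x‖ ^ 2 / tau + ‖WithLp.toLp 2 y‖ ^ 2 / sigma
  have hQ : 0 < Q := by
    have hxy : x ≠ 0 ∨ y ≠ 0 := by
      contrapose! hv
      rw [hv.1, hv.2, Sum.elim_zero_zero]
    rcases hxy with hx | hy
    · have : 0 < ‖WithLp.toLp 2 x‖ := by simpa using hx
      exact add_pos_of_pos_of_nonneg (by positivity) (by positivity)
    · have : 0 < ‖WithLp.toLp 2 y‖ := by simpa using hy
      exact add_pos_of_nonneg_of_pos (by positivity) (by positivity)
  rw [l2_opNorm_transpose_mul_self, l2_opNorm_transpose_mul_self] at hcond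
  rw [star_trivial, sumElim_dotProduct_fromBlocks_mulVec_sumElim, sub_pos]
  calc lam * ‖WithLp.toLp 2 (A *ᵥ x + B *ᵥ y)‖ ^ 2
      ≤ lam * ((tau * ‖A‖ ^ 2 + sigma * ‖B‖ ^ 2) * Q) :=
        mul_le_mul_of_nonneg_left (norm_toLp_mulVec_add_mulVec_sq_le A B x y htau hsigma) hlam.le
    _ = (lam * tau * ‖A‖ ^ 2 + lam * sigma * ‖B‖ ^ 2) * Q := by ring
    _ < Q := mul_lt_of_lt_one_left hQ hcond
    _ = _ := by ring
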